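/- The group P defined by the presentation ⟨a, b | b⁻¹a²b = a⁻², a⁻¹b²a = b⁻²⟩ is torsion-free. -/

import Mathlib

/-!
`P` embeds into the Hantzsche–Wendt group `HW`, the torsion-free crystallographic group of
isometries `y ↦ D y + t` of `ℝ³` whose linear parts `D` are the diagonal rotations by `π`.
Sending `a` and `b` to the screw motions with axes the first and second coordinate axes respects
the relations. It is injective because, with `A = a²`, `B = b²` and `C = (ab)²`, every element of
`P` can be written as `A ^ i * B ^ j * C ^ k * w` with `w ∈ {1, a, b, (ab)⁻¹}`: this set contains `1`
and is stable under left multiplication by `a` and `b`. Finally `HW` is torsion-free: the square of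
`y ↦ D y + t` is the translation by `D t + t`, and when `D ≠ 1` the coordinate of `t` along the axis
of `D` is a half-odd integer, so the square is a nontrivial translation.
-/

/-- Relators of the Promislow (Hantzsche–Wendt) group
`P = ⟨a, b | b⁻¹a²b = a⁻², a⁻¹b²a = b⁻²⟩`, written as
`b⁻¹a²ba²` and `a⁻¹b²ab²` on generators `a = 0`, `b = 1`. -/
def promislowRels : Set (FreeGroup (Fin 2)) :=
  {(FreeGroup.of 1)⁻¹ * (FreeGroup.of 0) ^ 2 * FreeGroup.of 1 * (FreeGroup.of 0) ^ 2,
   (FreeGroup.of 0)⁻¹ * (FreeGroup.of 1) ^ 2 * FreeGroup.of 0 * (FreeGroup.of 1) ^ 2}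

theorem MonoidHom.leftInverse_of_closure_eq_top {G H : Type*} [Group G] [Group H] (f : G →* H)
    (σ : H → G) {s : Set G} (hs : Subgroup.closure s = ⊤) (hσ₁ : σ 1 = 1)
    (hσ : ∀ g ∈ s, ∀ q, σ (f g * q) = g * σ q) : Function.LeftInverse σ f := by
  have key (g : G) : ∀ q, σ (f g * q) = g * σ q := by
    induction (hs ▸ Subgroup.mem_top g : g ∈ Subgroup.closure s) using
      Subgroup.closure_induction with
    | mem g hg => exact hσ g hg
    | one => simp
    | mul g h _ _ hg hh => intro q; rw [map_mul, mul_assoc, hg, hh, mul_assoc]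
    | inv g _ hg =>
      intro q
      rw [eq_inv_mul_iff_mul_eq, ← hg, ← mul_assoc, ← map_mul, mul_inv_cancel, map_one, one_mul]
  intro g
  simpa [hσ₁] using key g 1

lemma SemiconjBy.inv_left_of_inv {G : Type*} [Group G] {u g : G} (h : SemiconjBy u g g⁻¹) :
    SemiconjBy u⁻¹ g g⁻¹ := by
  simpa using h.inv_symm_left.inv_right

lemma SemiconjBy.commute_sq_of_inv {G : Type*} [Group G] {u g : G} (h : SemiconjBy u g g⁻¹) :
    Commute (u ^ 2) g := by
  rw [pow_two]
  exact (by simpa using h.inv_right : SemiconjBy u g⁻¹ g).mul_left h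

namespace Promislow

abbrev Holonomy := ZMod 2 × ZMod 2
abbrev Lattice := ℤ × ℤ × ℤ

lemma holonomy_cases : ∀ x : Holonomy, x = 0 ∨ x = (1, 0) ∨ x = (0, 1) ∨ x = (1, 1) := by
  decide

/-- The diagonal of the rotation by `π` encoded by `x`; multiplication on `Lattice` is
componentwise, so `sign x * v` is the rotated vector. -/
def sign (x : Holonomy) : Lattice :=
  (if x.2 = 0 then 1 else -1, if x.1 = 0 then 1 else -1, if x.1 = x.2 then 1 else -1)

lemma sign_zero : sign 0 = 1 := by decide

lemma sign_add : ∀ x y : Holonomy, sign (x + y) = sign x * sign y := by decide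

/-- Twice the translation part of the screw motion with linear part `sign x`. -/
def shift (x : Holonomy) : Lattice :=
  if x = (1, 0) then (1, 1, 0) else if x = (0, 1) then (0, 1, -1)
  else if x = (1, 1) then (1, 0, -1) else 0

/-- `⟨v, x⟩ : HW` stands for the isometry `y ↦ sign x * y + v + shift x / 2`, so the product of
`⟨v, x⟩` and `⟨w, y⟩` has lattice part `v + sign x * w + cocycle x y`. The numerator is always
even, so the integer division is exact. -/
def cocycle (x y : Holonomy) : Lattice :=
  (shift x + sign x * shift y - shift (x + y)) / 2

lemma cocycle_condition : ∀ x y z : Holonomy,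
    sign x * cocycle y z + cocycle x (y + z) = cocycle x y + cocycle (x + y) z := by
  decide

lemma cocycle_zero_left : ∀ y : Holonomy, cocycle 0 y = 0 := by decide

lemma cocycle_zero_right : ∀ x : Holonomy, cocycle x 0 = 0 := by decide

@[ext]
structure HW where
  v : Lattice
  x : Holonomy
deriving DecidableEq

namespace HW

instance : One HW := ⟨⟨0, 0⟩⟩
instance : Mul HW := ⟨fun p q ↦ ⟨p.v + sign p.x * q.v + cocycle p.x q.x, p.x + q.x⟩⟩
instance : Inv HW := ⟨fun p ↦ ⟨-(sign p.x * p.v) - cocycle p.x p.x, p.x⟩⟩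

lemma one_def : (1 : HW) = ⟨0, 0⟩ := rfl

lemma mul_def (p q : HW) : p * q = ⟨p.v + sign p.x * q.v + cocycle p.x q.x, p.x + q.x⟩ := rfl

instance : Group HW where
  mul_assoc p q r := by
    refine HW.ext ?_ (add_assoc ..)
    simp only [mul_def, sign_add]
    linear_combination (exp := 1) -cocycle_condition p.x q.x r.x
  one_mul p := HW.ext (by simp [mul_def, one_def, cocycle_zero_left, sign_zero])
    (zero_add _)
  mul_one p := HW.ext (by simp [mul_def, one_def, cocycle_zero_right]) (add_zero _)
  inv_mul_cancel p := HW.ext (by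
    change -(sign p.x * p.v) - cocycle p.x p.x + sign p.x * p.v + cocycle p.x p.x = 0; abel)
    (CharTwo.add_self_eq_zero p.x)

lemma mk_zero_pow (v : Lattice) (n : ℕ) : (⟨v, 0⟩ : HW) ^ n = ⟨n • v, 0⟩ := by
  induction n with
  | zero => simp [one_def]
  | succ k ih =>
    apply HW.ext <;> simp [pow_succ, ih, mul_def, sign_zero, cocycle_zero_left, add_smul]

lemma sq_eq (p : HW) : p ^ 2 = ⟨p.v + sign p.x * p.v + cocycle p.x p.x, 0⟩ := by
  rw [pow_two, mul_def, CharTwo.add_self_eq_zero]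

lemma eq_one_of_sq_eq_one {p : HW} (h : p ^ 2 = 1) : p = 1 := by
  obtain ⟨⟨m₁, m₂, m₃⟩, x⟩ := p
  have odd_on_axis : ∀ x : Holonomy, x = 0 ∨ (sign x).1 = 1 ∧ (cocycle x x).1 % 2 = 1 ∨
      (sign x).2.1 = 1 ∧ (cocycle x x).2.1 % 2 = 1 ∨
      (sign x).2.2 = 1 ∧ (cocycle x x).2.2 % 2 = 1 := by
    decide
  rw [sq_eq, one_def, HW.mk.injEq] at h
  simp only [Prod.ext_iff, Prod.fst_add, Prod.snd_add, Prod.fst_mul, Prod.snd_mul,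
    Prod.fst_zero, Prod.snd_zero] at h
  rcases odd_on_axis x with rfl | ⟨hs, hc⟩ | ⟨hs, hc⟩ | ⟨hs, hc⟩
  · simp only [cocycle_zero_left, sign_zero, Prod.fst_one, Prod.snd_one,
      Prod.fst_zero, Prod.snd_zero] at h
    refine HW.ext ?_ rfl
    simp only [one_def, Prod.ext_iff, Prod.fst_zero, Prod.snd_zero]
    omega
  all_goals rw [hs] at h; omega

lemma eq_one_of_isOfFinOrder {p : HW} (hp : IsOfFinOrder p) : p = 1 := by
  refine eq_one_of_sq_eq_one ?_
  obtain ⟨n, hn, hpow⟩ := isOfFinOrder_iff_pow_eq_one.mp (hp.pow (n := 2))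
  rw [sq_eq, mk_zero_pow, one_def, HW.mk.injEq, smul_eq_zero] at hpow
  rw [sq_eq, one_def, hpow.1.resolve_left hn.ne']

end HW

abbrev P := PresentedGroup promislowRels

def a : P := PresentedGroup.of 0
def b : P := PresentedGroup.of 1

local notation "A" => a ^ 2
local notation "B" => b ^ 2
local notation "C" => (a * b) ^ 2

lemma relator_a : b⁻¹ * A * b * A = 1 := PresentedGroup.one_of_mem (Or.inl rfl)

lemma relator_b : a⁻¹ * B * a * B = 1 := PresentedGroup.one_of_mem (Or.inr rfl)

lemma semiconjBy_b_A : SemiconjBy b A A⁻¹ := by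
  have h : SemiconjBy b⁻¹ A A⁻¹ := calc
    b⁻¹ * A = (b⁻¹ * A * b * A) * A⁻¹ * b⁻¹ := by group
    _ = A⁻¹ * b⁻¹ := by rw [relator_a, one_mul]
  simpa using h.inv_left_of_inv

lemma semiconjBy_a_B : SemiconjBy a B B⁻¹ := by
  have h : SemiconjBy a⁻¹ B B⁻¹ := calc
    a⁻¹ * B = (a⁻¹ * B * a * B) * B⁻¹ * a⁻¹ := by group
    _ = B⁻¹ * a⁻¹ := by rw [relator_b, one_mul]
  simpa using h.inv_left_of_inv

lemma semiconjBy_b_inv_A : SemiconjBy b A⁻¹ A := by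
  simpa using semiconjBy_b_A.inv_right

lemma semiconjBy_a_C : SemiconjBy a C C⁻¹ := calc
  a * C = (A * b) * a * b := by simp only [sq]; group
  _ = (b * A⁻¹) * a * b := by rw [semiconjBy_b_inv_A.eq]
  _ = b⁻¹ * (B * a⁻¹) * b := by group
  _ = b⁻¹ * (a⁻¹ * B⁻¹) * b := by rw [semiconjBy_a_B.inv_symm_left.eq]
  _ = C⁻¹ * a := by simp only [sq]; group

lemma semiconjBy_b_C : SemiconjBy b C C⁻¹ := by
  simpa using semiconjBy_a_C.inv_left_of_inv.mul_left (Commute.self_pow (a * b) 2)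

def translation (v : Lattice) : P := A ^ v.1 * B ^ v.2.1 * C ^ v.2.2

lemma translation_add (u v : Lattice) : translation (u + v) = translation u * translation v := by
  have hCA (m n : ℤ) (g : P) : C ^ m * (A ^ n * g) = A ^ n * (C ^ m * g) :=
    (semiconjBy_a_C.commute_sq_of_inv.zpow_zpow n m).symm.left_comm g
  have hBA (m n : ℤ) (g : P) : B ^ m * (A ^ n * g) = A ^ n * (B ^ m * g) :=
    (semiconjBy_a_B.commute_sq_of_inv.zpow_zpow n m).symm.left_comm g
  have hCB (m n : ℤ) (g : P) : C ^ m * (B ^ n * g) = B ^ n * (C ^ m * g) :=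
    (semiconjBy_b_C.commute_sq_of_inv.zpow_zpow n m).symm.left_comm g
  simp only [translation, Prod.fst_add, Prod.snd_add, zpow_add, mul_assoc, hCA, hBA, hCB]

lemma semiconjBy_translation {u : P} {y : Holonomy} (hA : SemiconjBy u A (A ^ (sign y).1))
    (hB : SemiconjBy u B (B ^ (sign y).2.1)) (hC : SemiconjBy u C (C ^ (sign y).2.2))
    (v : Lattice) : SemiconjBy u (translation v) (translation (sign y * v)) := by
  simp only [translation, Prod.fst_mul, Prod.snd_mul, zpow_mul]
  exact ((hA.zpow_right v.1).mul_right (hB.zpow_right v.2.1)).mul_right (hC.zpow_right v.2.2)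

/-- Chosen so that `toHW (rep x) = ⟨0, x⟩`, which is why `(1, 1)` gets `(a * b)⁻¹`. -/
def rep (x : Holonomy) : P :=
  if x = (1, 0) then a else if x = (0, 1) then b else if x = (1, 1) then (a * b)⁻¹ else 1

lemma a_mul_rep (x : Holonomy) :
    a * rep x = translation (cocycle (1, 0) x) * rep ((1, 0) + x) := by
  rcases holonomy_cases x with rfl | rfl | rfl | rfl
  · show a * 1 = translation 0 * a
    simp [translation]
  · show a * a = translation (1, 0, 0) * 1
    simp [translation, sq]
  · show a * b = translation (0, 0, 1) * (a * b)⁻¹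
    simp only [translation, zpow_zero, zpow_one, one_mul, sq]
    group
  · show a * (a * b)⁻¹ = translation (1, 0, 1) * b
    simp only [translation, zpow_one, zpow_zero, mul_one]
    symm
    calc A * C * b = a * (A * b) * a * B := by simp only [sq]; group
      _ = a * (b * A⁻¹) * a * B := by rw [semiconjBy_b_inv_A.eq]
      _ = a * b * (a⁻¹ * B) := by group
      _ = a * b * (B⁻¹ * a⁻¹) := by rw [semiconjBy_a_B.inv_left_of_inv.eq]
      _ = a * (a * b)⁻¹ := by simp only [sq]; group

lemma b_mul_rep (x : Holonomy) :
    b * rep x = translation (cocycle (0, 1) x) * rep ((0, 1) + x) := by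
  rcases holonomy_cases x with rfl | rfl | rfl | rfl
  · show b * 1 = translation 0 * b
    simp [translation]
  · show b * a = translation (-1, 1, 0) * (a * b)⁻¹
    simp only [translation, zpow_neg_one, zpow_one, zpow_zero, mul_one]
    calc b * a = A⁻¹ * (A * b) * a := by group
      _ = A⁻¹ * (b * A⁻¹) * a := by rw [semiconjBy_b_inv_A.eq]
      _ = A⁻¹ * B * (a * b)⁻¹ := by simp only [sq]; group
  · show b * b = translation (0, 1, 0) * 1
    simp [translation, sq]
  · show b * (a * b)⁻¹ = translation (-1, 0, 0) * a
    simp [translation, sq]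

def ofHW (p : HW) : P := translation p.v * rep p.x

lemma ofHW_mk_zero_mul {u : P} {y : Holonomy}
    (hT : ∀ v, SemiconjBy u (translation v) (translation (sign y * v)))
    (hrep : ∀ x, u * rep x = translation (cocycle y x) * rep (y + x)) (q : HW) :
    ofHW (⟨0, y⟩ * q) = u * ofHW q := calc
  ofHW (⟨0, y⟩ * q)
      = translation (sign y * q.v) * (translation (cocycle y q.x) * rep (y + q.x)) := by
    rw [ofHW, HW.mul_def, zero_add, translation_add, mul_assoc]
  _ = u * ofHW q := by rw [← hrep, ← mul_assoc, ← (hT q.v).eq, mul_assoc, ofHW]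

lemma ofHW_mk_zero_mul_a (q : HW) : ofHW (⟨0, (1, 0)⟩ * q) = a * ofHW q := by
  have hs : sign (1, 0) = (1, -1, -1) := by decide
  refine ofHW_mk_zero_mul (semiconjBy_translation ?_ ?_ ?_) a_mul_rep q <;>
    simp only [hs, zpow_one, zpow_neg_one]
  exacts [Commute.self_pow a 2, semiconjBy_a_B, semiconjBy_a_C]

lemma ofHW_mk_zero_mul_b (q : HW) : ofHW (⟨0, (0, 1)⟩ * q) = b * ofHW q := by
  have hs : sign (0, 1) = (-1, 1, -1) := by decide
  refine ofHW_mk_zero_mul (semiconjBy_translation ?_ ?_ ?_) b_mul_rep q <;>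
    simp only [hs, zpow_one, zpow_neg_one]
  exacts [semiconjBy_b_A, Commute.self_pow b 2, semiconjBy_b_C]

def toHW : P →* HW :=
  PresentedGroup.toGroup (f := ![⟨0, (1, 0)⟩, ⟨0, (0, 1)⟩]) <| by
    rintro r (rfl | rfl) <;> decide

lemma toHW_injective : Function.Injective toHW := by
  have ofHW_one : ofHW 1 = 1 := by
    show translation 0 * 1 = 1
    simp [translation]
  refine (toHW.leftInverse_of_closure_eq_top ofHW (PresentedGroup.closure_range_of _) ofHW_one
    ?_).injective
  rintro _ ⟨i, rfl⟩ q
  fin_cases i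
  exacts [ofHW_mk_zero_mul_a q, ofHW_mk_zero_mul_b q]

end Promislow

/-- The Promislow group `P` is torsion-free. -/
theorem promislow_torsionFree :
    ∀ g : PresentedGroup promislowRels, g ≠ 1 → ¬IsOfFinOrder g := fun _ hg hfin ↦
  hg <| (map_eq_one_iff _ Promislow.toHW_injective).mp <|
    Promislow.HW.eq_one_of_isOfFinOrder (Promislow.toHW.isOfFinOrder hfin)
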